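/- If G is a complete graph with at least two vertices and H is a well-dominated graph with γ(H) = 2, then every minimal dominating set of the lexicographic product G[H] has size 2; in particular G[H] is well-dominated. -/

import Mathlib

open SimpleGraph Finset

/-- Open neighborhood of a set: vertices having a neighbor in `S`. -/
def nbhd {V : Type*} (G : SimpleGraph V) (S : Set V) : Set V := {v | ∃ u ∈ S, G.Adj u v}

/-- Closed neighborhood of a vertex. -/
def closedNbhd {V : Type*} (G : SimpleGraph V) (v : V) : Set V := insert v (G.neighborSet v)

/-- `S` dominates vertex `v`. -/
def Dominates {V : Type*} (G : SimpleGraph V) (S : Set V) (v : V) : Prop :=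
  v ∈ S ∨ ∃ u ∈ S, G.Adj u v

/-- `D` is a dominating set of `G`. -/
def IsDomSet {V : Type*} (G : SimpleGraph V) (D : Set V) : Prop := ∀ v, Dominates G D v

/-- `D` is a minimal dominating set of `G`. -/
def IsMinDomSet {V : Type*} (G : SimpleGraph V) (D : Set V) : Prop :=
  IsDomSet G D ∧ ∀ D' ⊂ D, ¬ IsDomSet G D'

/-- `D` is an irreducible dominating set of `G`. -/
def IsIrredDomSet {V : Type*} (G : SimpleGraph V) (D : Set V) : Prop :=
  IsDomSet G D ∧ ¬ ∃ u ∈ D, IsDomSet G (D \ {u}) ∧ nbhd G D = nbhd G (D \ {u})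

/-- Lexicographic product of two simple graphs. -/
def lexProd {V W : Type*} (G : SimpleGraph V) (H : SimpleGraph W) : SimpleGraph (V × W) where
  Adj p q := G.Adj p.1 q.1 ∨ (p.1 = q.1 ∧ H.Adj p.2 q.2)
  symm := by
    constructor
    rintro p q (h | ⟨e, h⟩)
    · exact Or.inl h.symm
    · exact Or.inr ⟨e.symm, h.symm⟩
  loopless := by
    constructor
    rintro p (h | ⟨_, h⟩)
    · exact G.loopless.irrefl _ h
    · exact H.loopless.irrefl _ h

/-- Projection of `D ⊆ V(G) × V(H)` to `G`. -/
def projG {V W : Type*} (D : Set (V × W)) : Set V := {x | ∃ y, (x, y) ∈ D}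

/-- Fiber of `D ⊆ V(G) × V(H)` over `x ∈ V(G)`. -/
def projH {V W : Type*} (D : Set (V × W)) (x : V) : Set W := {y | (x, y) ∈ D}

/-- The domination number. -/
noncomputable def domNum {V : Type*} [Fintype V] (G : SimpleGraph V) : ℕ :=
  sInf {n | ∃ D : Finset V, IsDomSet G ↑D ∧ D.card = n}

/-- A graph is well-dominated if all its minimal dominating sets have the same size. -/
def WellDominated (V : Type*) [Fintype V] (G : SimpleGraph V) : Prop :=
  ∀ D₁ D₂ : Finset V, IsMinDomSet G ↑D₁ → IsMinDomSet G ↑D₂ → D₁.card = D₂.card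

/-!
A dominating set of `K_n[H]` either contains two vertices in different `K_n`-layers, and then these
two alone dominate, so a minimal one is exactly such a pair; or it lies in a single layer
`{x} × V(H)`, and then it is a copy of a (minimal) dominating set of `H`, whose size in a
well-dominated `H` is `γ(H) = 2`.
-/

section Domination

variable {V : Type*}

theorem IsDomSet.nonempty [Nonempty V] {G : SimpleGraph V} {D : Set V} (hD : IsDomSet G D) :
    D.Nonempty := by
  obtain ⟨v⟩ := ‹Nonempty V›
  rcases hD v with hv | ⟨u, hu, -⟩
  exacts [⟨v, hv⟩, ⟨u, hu⟩]

theorem IsMinDomSet.eq_of_subset {G : SimpleGraph V} {D D' : Set V} (hD : IsMinDomSet G D)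
    (hsub : D' ⊆ D) (hD' : IsDomSet G D') : D' = D := by
  by_contra hne
  exact hD.2 D' (Set.ssubset_iff_subset_ne.mpr ⟨hsub, hne⟩) hD'

variable [Fintype V]

theorem domNum_le_card {G : SimpleGraph V} {D : Finset V} (hD : IsDomSet G ↑D) :
    domNum G ≤ D.card :=
  Nat.sInf_le ⟨D, hD, rfl⟩

theorem exists_isDomSet_card_eq_domNum (G : SimpleGraph V) :
    ∃ D : Finset V, IsDomSet G ↑D ∧ D.card = domNum G :=
  Nat.sInf_mem (s := {n | ∃ D : Finset V, IsDomSet G ↑D ∧ D.card = n})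
    ⟨_, univ, fun v => Or.inl (mem_univ v), rfl⟩

theorem nonempty_of_domNum_ne_zero (G : SimpleGraph V) (h : domNum G ≠ 0) : Nonempty V := by
  by_contra hV
  rw [not_nonempty_iff] at hV
  exact h (Nat.le_zero.mp (domNum_le_card (D := ∅) fun v => isEmptyElim v))

theorem isMinDomSet_of_card_eq_domNum {G : SimpleGraph V} {D : Finset V} (hD : IsDomSet G ↑D)
    (hcard : D.card = domNum G) : IsMinDomSet G ↑D := by
  refine ⟨hD, fun D' hD'D hD' => ?_⟩
  have hfin : D'.Finite := D.finite_toSet.subset hD'D.subset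
  have hlt : hfin.toFinset.card < D.card :=
    card_lt_card (by rwa [← coe_ssubset, hfin.coe_toFinset])
  have hle : domNum G ≤ hfin.toFinset.card := domNum_le_card (by rwa [hfin.coe_toFinset])
  omega

theorem WellDominated.card_eq_domNum {G : SimpleGraph V} (hG : WellDominated V G)
    {D : Finset V} (hD : IsMinDomSet G ↑D) : D.card = domNum G := by
  obtain ⟨D₀, hD₀, hcard⟩ := exists_isDomSet_card_eq_domNum G
  exact (hG D D₀ hD (isMinDomSet_of_card_eq_domNum hD₀ hcard)).trans hcard

end Domination

section LexProdTop

variable {V W : Type*} {H : SimpleGraph W}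

theorem lexProd_top_adj_of_fst_ne {a b : V × W} (hab : a.1 ≠ b.1) :
    (lexProd (⊤ : SimpleGraph V) H).Adj a b :=
  Or.inl hab

theorem isDomSet_lexProd_top_pair {a b : V × W} (hab : a.1 ≠ b.1) :
    IsDomSet (lexProd (⊤ : SimpleGraph V) H) {a, b} := by
  intro v
  by_cases hv : a.1 = v.1
  · exact Or.inr ⟨b, by simp, lexProd_top_adj_of_fst_ne (hv ▸ hab.symm)⟩
  · exact Or.inr ⟨a, by simp, lexProd_top_adj_of_fst_ne hv⟩

theorem isDomSet_lexProd_top_image_mk_iff (x : V) (S : Set W) :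
    IsDomSet (lexProd (⊤ : SimpleGraph V) H) (Prod.mk x '' S) ↔ IsDomSet H S := by
  constructor
  · intro hD y
    rcases hD (x, y) with ⟨y', hy', hxy⟩ | ⟨_, ⟨u, hu, rfl⟩, hadj⟩
    · exact Or.inl (Prod.mk_right_injective x hxy ▸ hy')
    · rcases hadj with hxx | ⟨-, huy⟩
      · exact ((top_adj x x).mp hxx rfl).elim
      · exact Or.inr ⟨u, hu, huy⟩
  · intro hS ⟨v, y⟩
    by_cases hv : x = v
    · subst hv
      rcases hS y with hy | ⟨u, hu, huy⟩
      exacts [Or.inl ⟨y, hy, rfl⟩, Or.inr ⟨(x, u), ⟨u, hu, rfl⟩, Or.inr ⟨rfl, huy⟩⟩]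
    · obtain ⟨u, hu⟩ : S.Nonempty := by
        rcases hS y with hy | ⟨u, hu, -⟩
        exacts [⟨y, hy⟩, ⟨u, hu⟩]
      exact Or.inr ⟨(x, u), ⟨u, hu, rfl⟩, lexProd_top_adj_of_fst_ne hv⟩

theorem IsMinDomSet.of_lexProd_top_image_mk {x : V} {S : Set W}
    (hD : IsMinDomSet (lexProd (⊤ : SimpleGraph V) H) (Prod.mk x '' S)) : IsMinDomSet H S :=
  ⟨(isDomSet_lexProd_top_image_mk_iff x S).mp hD.1, fun S' hS'S hS' =>
    hD.2 _ ((Prod.mk_right_injective x).image_strictMono hS'S)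
      ((isDomSet_lexProd_top_image_mk_iff x S').mpr hS')⟩

theorem Finset.eq_image_mk_image_snd [DecidableEq V] [DecidableEq W] {D : Finset (V × W)}
    {x : V} (hD : ∀ a ∈ D, a.1 = x) : D = (D.image Prod.snd).image (Prod.mk x) := by
  ext p
  constructor
  · intro hp
    exact mem_image.mpr ⟨p.2, mem_image_of_mem _ hp, Prod.ext (hD p hp).symm rfl⟩
  · intro hp
    obtain ⟨_, hw, rfl⟩ := mem_image.mp hp
    obtain ⟨a, ha, rfl⟩ := mem_image.mp hw
    rwa [show (x, a.2) = a from Prod.ext (hD a ha).symm rfl]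

theorem IsMinDomSet.card_lexProd_top {D : Finset (V × W)}
    (hD : IsMinDomSet (lexProd (⊤ : SimpleGraph V) H) ↑D) (hDne : D.Nonempty) :
    D.card = 2 ∨ ∃ S : Finset W, IsMinDomSet H ↑S ∧ S.card = D.card := by
  classical
  by_cases hlayers : ∃ a ∈ D, ∃ b ∈ D, a.1 ≠ b.1
  · obtain ⟨a, ha, b, hb, hab⟩ := hlayers
    have hpair : ({a, b} : Set (V × W)) = ↑D :=
      hD.eq_of_subset (Set.insert_subset ha (Set.singleton_subset_iff.mpr hb))
        (isDomSet_lexProd_top_pair hab)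
    left
    rw [← coe_pair, coe_inj] at hpair
    rw [← hpair, card_pair (fun h => hab (congrArg Prod.fst h))]
  · push Not at hlayers
    obtain ⟨p, hp⟩ := hDne
    have hDS := Finset.eq_image_mk_image_snd fun a ha => hlayers a ha p hp
    right
    refine ⟨D.image Prod.snd, ?_, ?_⟩
    · rw [hDS, coe_image] at hD
      exact hD.of_lexProd_top_image_mk
    · conv_rhs => rw [hDS]
      exact (card_image_of_injective _ (Prod.mk_right_injective p.1)).symm

end LexProdTop

theorem stmt16 {V W : Type*} [Fintype V] [Fintype W]
    (G : SimpleGraph V) (H : SimpleGraph W)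
    (hGcomplete : G = ⊤) (hVcard : 2 ≤ Fintype.card V)
    (hHwd : WellDominated W H) (hHγ : domNum H = 2) :
    (∀ D : Finset (V × W), IsMinDomSet (lexProd G H) ↑D → D.card = 2) ∧
      WellDominated (V × W) (lexProd G H) := by
  subst hGcomplete
  have : Nonempty V := Fintype.card_pos_iff.mp (by omega)
  have : Nonempty W := nonempty_of_domNum_ne_zero H (by omega)
  have hcard (D : Finset (V × W)) (hD : IsMinDomSet (lexProd (⊤ : SimpleGraph V) H) ↑D) :
      D.card = 2 := by
    rcases hD.card_lexProd_top (coe_nonempty.mp hD.1.nonempty) with h | ⟨S, hS, hSD⟩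
    · exact h
    · rw [← hSD, hHwd.card_eq_domNum hS, hHγ]
  exact ⟨hcard, fun D₁ D₂ h₁ h₂ => (hcard D₁ h₁).trans (hcard D₂ h₂).symm⟩
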